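/- Let H be self-adjoint on a finite-dimensional Hilbert space with spectral projection P onto a patch Σ¹ separated by a gap γ > 0 from the rest of the spectrum. If A is block off-diagonal with respect to P (A = PA(1-P) + (1-P)AP), then the regularized integral i ∫₀^∞ e^{-δt} e^{-itH} [H, A] e^{itH} dt converges to A as δ ↓ 0. -/

import Mathlib

/-!
Split an operator into spectral blocks `X = ∑ᵢⱼ Eᵢ X Eⱼ`. On the block `(i, j)` the evolution
`e^{-itH} · e^{itH}` acts by the phase `e^{-itμ}` and the commutator `[H, ·]` by the factor `μ`,
where `μ = λᵢ - λⱼ`; hence the regularized integral multiplies the block by `iμ / (δ + iμ)`,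
which tends to `1` as `δ ↓ 0` when `μ ≠ 0`. The blocks with `λᵢ = λⱼ` vanish: by the gap, `i` and
`j` then lie on the same side of `P`, and `A` has no diagonal blocks.
-/

open MeasureTheory Complex Filter Topology

namespace OrthogonalIdempotents

variable {R 𝔸 ι : Type*} [CommRing R] [Ring 𝔸] [Algebra R 𝔸] {E : ι → 𝔸}

lemma sum_mul_of_mem (he : OrthogonalIdempotents E) {j : ι} {s : Finset ι} (h : j ∈ s) :
    (∑ i ∈ s, E i) * E j = E j := by
  classical
  simp [Finset.sum_mul, he.mul_eq, h]

lemma sum_mul_of_notMem (he : OrthogonalIdempotents E) {j : ι} {s : Finset ι} (h : j ∉ s) :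
    (∑ i ∈ s, E i) * E j = 0 := by
  classical
  simp [Finset.sum_mul, he.mul_eq, h]

lemma mul_mul_eq_zero_of_mem_iff_mem (he : OrthogonalIdempotents E) {s : Finset ι} {A : 𝔸}
    (hA : A = (∑ i ∈ s, E i) * A * (1 - ∑ i ∈ s, E i) + (1 - ∑ i ∈ s, E i) * A * ∑ i ∈ s, E i)
    {i j : ι} (hij : i ∈ s ↔ j ∈ s) : E i * A * E j = 0 := by
  set P := ∑ i ∈ s, E i
  have hsplit : E i * A * E j = E i * P * A * ((1 - P) * E j) + E i * (1 - P) * A * (P * E j) := by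
    conv_lhs => rw [hA]
    noncomm_ring
  by_cases hi : i ∈ s
  · have hleft : E i * (1 - P) = 0 := by rw [mul_sub, mul_one, he.mul_sum_of_mem hi, sub_self]
    have hright : (1 - P) * E j = 0 := by
      rw [sub_mul, one_mul, he.sum_mul_of_mem (hij.mp hi), sub_self]
    simp [hsplit, hleft, hright]
  · simp [hsplit, P, he.mul_sum_of_notMem hi, he.sum_mul_of_notMem (mt hij.mpr hi)]

variable [Fintype ι]

lemma sum_smul_mul (he : OrthogonalIdempotents E) (c : ι → R) (j : ι) :
    (∑ i, c i • E i) * E j = c j • E j := by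
  classical
  simp [Finset.sum_mul, he.mul_eq]

lemma mul_sum_smul (he : OrthogonalIdempotents E) (c : ι → R) (i : ι) :
    E i * ∑ j, c j • E j = c i • E i := by
  classical
  simp [Finset.mul_sum, he.mul_eq]

lemma mul_commutator_mul (he : OrthogonalIdempotents E) (c : ι → R) (X : 𝔸) (i j : ι) :
    E i * ((∑ l, c l • E l) * X - X * ∑ l, c l • E l) * E j = (c i - c j) • (E i * X * E j) := by
  rw [mul_sub, sub_mul, ← mul_assoc, he.mul_sum_smul, mul_assoc (E i), mul_assoc X,
    he.sum_smul_mul]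
  simp only [smul_mul_assoc, mul_smul_comm, sub_smul, mul_assoc]

end OrthogonalIdempotents

lemma CompleteOrthogonalIdempotents.sum_sum_mul_mul {𝔸 ι : Type*} [Ring 𝔸] [Fintype ι]
    {E : ι → 𝔸} (he : CompleteOrthogonalIdempotents E) (X : 𝔸) :
    ∑ i, ∑ j, E i * X * E j = X := by
  simp [← Finset.mul_sum, ← Finset.sum_mul, he.complete]

section Exp

variable {𝔸 : Type*} [NormedRing 𝔸] [NormedAlgebra ℂ 𝔸] [CompleteSpace 𝔸]

lemma exp_mul_of_mul_eq_smul {M e : 𝔸} {a : ℂ} (h : M * e = a • e) :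
    NormedSpace.exp M * e = cexp a • e := by
  let +nondep : NormedAlgebra ℚ 𝔸 := .restrictScalars ℚ ℂ 𝔸
  have : SemiconjBy e (algebraMap ℂ 𝔸 a) M := by
    rw [SemiconjBy, h, Algebra.smul_def, Algebra.commutes]
  rw [← this.exp_right, ← NormedSpace.algebraMap_exp_comm, ← Complex.exp_eq_exp_ℂ,
    Algebra.smul_def, Algebra.commutes]

lemma mul_exp_of_mul_eq_smul {M e : 𝔸} {a : ℂ} (h : e * M = a • e) :
    e * NormedSpace.exp M = cexp a • e := by
  let +nondep : NormedAlgebra ℚ 𝔸 := .restrictScalars ℚ ℂ 𝔸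
  have : SemiconjBy e M (algebraMap ℂ 𝔸 a) := by
    rw [SemiconjBy, h, Algebra.smul_def]
  rw [this.exp_right, ← NormedSpace.algebraMap_exp_comm, ← Complex.exp_eq_exp_ℂ, Algebra.smul_def]

lemma OrthogonalIdempotents.mul_exp_mul_exp_mul {ι : Type*} [Fintype ι] {E : ι → 𝔸}
    (he : OrthogonalIdempotents E) (lam : ι → ℂ) (c₁ c₂ : ℂ) (Y : 𝔸) (i j : ι) :
    E i * (NormedSpace.exp (c₁ • ∑ l, lam l • E l) * Y * NormedSpace.exp (c₂ • ∑ l, lam l • E l))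
      * E j = (cexp (c₁ * lam i) * cexp (c₂ * lam j)) • (E i * Y * E j) := by
  have hleft : E i * NormedSpace.exp (c₁ • ∑ l, lam l • E l) = cexp (c₁ * lam i) • E i :=
    mul_exp_of_mul_eq_smul (by rw [mul_smul_comm, he.mul_sum_smul, smul_smul])
  have hright : NormedSpace.exp (c₂ • ∑ l, lam l • E l) * E j = cexp (c₂ * lam j) • E j :=
    exp_mul_of_mul_eq_smul (by rw [smul_mul_assoc, he.sum_smul_mul, smul_smul])
  simp only [← mul_assoc, hleft]
  rw [mul_assoc _ _ (E j), hright]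
  simp only [smul_mul_assoc, mul_smul_comm, smul_smul, mul_assoc, mul_comm]

end Exp

lemma tendsto_div_ofReal_add_smul {V : Type*} [NormedAddCommGroup V] [NormedSpace ℂ V] {a : ℂ}
    {v : V} (h : a = 0 → v = 0) : Tendsto (fun δ : ℝ => (a / (δ + a)) • v) (𝓝 0) (𝓝 v) := by
  by_cases ha : a = 0
  · simp [h ha]
  have hcont : ContinuousAt (fun δ : ℝ => a / (δ + a)) 0 := by
    refine continuousAt_const.div (by fun_prop) ?_
    simpa using ha
  simpa [ha] using hcont.tendsto.smul_const v

noncomputable def dampedEvolvedCommutator {𝔸 : Type*} [NormedRing 𝔸] [NormedAlgebra ℂ 𝔸]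
    (H X : 𝔸) (δ t : ℝ) : 𝔸 :=
  (Real.exp (-(δ * t)) : ℂ) •
    (NormedSpace.exp (-(I * t) • H) * (H * X - X * H) * NormedSpace.exp ((I * t) • H))

namespace CompleteOrthogonalIdempotents

variable {𝔸 ι : Type*} [NormedRing 𝔸] [NormedAlgebra ℂ 𝔸] [CompleteSpace 𝔸] [Fintype ι]
  {E : ι → 𝔸}

lemma dampedEvolvedCommutator_eq_sum (he : CompleteOrthogonalIdempotents E) (lam : ι → ℝ)
    (X : 𝔸) (δ t : ℝ) :
    dampedEvolvedCommutator (∑ l, (lam l : ℂ) • E l) X δ t =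
      ∑ i, ∑ j, (cexp (-(δ + I * (lam i - lam j)) * t) * (lam i - lam j)) • (E i * X * E j) := by
  rw [dampedEvolvedCommutator, ← he.sum_sum_mul_mul (_ • _)]
  refine Finset.sum_congr rfl fun i _ => Finset.sum_congr rfl fun j _ => ?_
  rw [mul_smul_comm, smul_mul_assoc, he.1.mul_exp_mul_exp_mul, he.1.mul_commutator_mul, smul_smul,
    smul_smul]
  congr 1
  rw [ofReal_exp, ← Complex.exp_add, ← Complex.exp_add]
  push_cast
  ring_nf

lemma integral_dampedEvolvedCommutator (he : CompleteOrthogonalIdempotents E) (lam : ι → ℝ)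
    (X : 𝔸) {δ : ℝ} (hδ : 0 < δ) :
    I • ∫ t in Set.Ioi (0 : ℝ), dampedEvolvedCommutator (∑ l, (lam l : ℂ) • E l) X δ t =
      ∑ i, ∑ j, (I * (lam i - lam j) / (δ + I * (lam i - lam j))) • (E i * X * E j) := by
  have hre : ∀ i j, (-(δ + I * (lam i - lam j)) : ℂ).re < 0 := fun i j => by simpa using hδ
  have hint : ∀ i j, Integrable (fun t : ℝ =>
      (cexp (-(δ + I * (lam i - lam j)) * t) * (lam i - lam j)) • (E i * X * E j))
      (volume.restrict (Set.Ioi 0)) := fun i j =>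
    ((integrableOn_exp_mul_complex_Ioi (hre i j) 0).mul_const _).smul_const _
  simp_rw [he.dampedEvolvedCommutator_eq_sum]
  rw [integral_finsetSum _ fun i _ => integrable_finsetSum _ fun j _ => hint i j,
    Finset.smul_sum]
  refine Finset.sum_congr rfl fun i _ => ?_
  rw [integral_finsetSum _ fun j _ => hint i j, Finset.smul_sum]
  refine Finset.sum_congr rfl fun j _ => ?_
  rw [integral_smul_const, integral_mul_const, integral_exp_mul_complex_Ioi (hre i j), smul_smul]
  congr 1
  simp only [ofReal_zero, mul_zero, Complex.exp_zero, neg_div_neg_eq]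
  ring

theorem tendsto_integral_dampedEvolvedCommutator (he : CompleteOrthogonalIdempotents E)
    (lam : ι → ℝ) {X : 𝔸} (hX : ∀ i j, lam i = lam j → E i * X * E j = 0) :
    Tendsto (fun δ : ℝ =>
        I • ∫ t in Set.Ioi (0 : ℝ), dampedEvolvedCommutator (∑ l, (lam l : ℂ) • E l) X δ t)
      (𝓝[>] 0) (𝓝 X) := by
  refine Tendsto.congr' (eventually_mem_nhdsWithin.mono fun δ hδ =>
    (he.integral_dampedEvolvedCommutator lam X hδ).symm) ?_
  nth_rewrite 2 [← he.sum_sum_mul_mul X]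
  refine tendsto_finsetSum _ fun i _ => tendsto_finsetSum _ fun j _ =>
    (tendsto_div_ofReal_add_smul fun h => hX i j ?_).mono_left nhdsWithin_le_nhds
  simpa [I_ne_zero, sub_eq_zero] using h

end CompleteOrthogonalIdempotents

theorem regularized_integral_converges_general (n k : ℕ)
    (H P A : EuclideanSpace ℂ (Fin n) →L[ℂ] EuclideanSpace ℂ (Fin n))
    (γ : ℝ) (hγ : 0 < γ)
    (lam : Fin k → ℝ)
    (E : Fin k → (EuclideanSpace ℂ (Fin n) →L[ℂ] EuclideanSpace ℂ (Fin n)))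
    (hEproj : ∀ i, E i * E i = E i)
    (hEorth : ∀ i j, i ≠ j → E i * E j = 0)
    (hEsum : ∑ i, E i = 1)
    (hH : H = ∑ i, (lam i : ℂ) • E i)
    (S : Finset (Fin k)) (hP : P = ∑ i ∈ S, E i)
    (hgap : ∀ i ∈ S, ∀ j ∉ S, γ ≤ |lam i - lam j|)
    (hA : A = P * A * (1 - P) + (1 - P) * A * P) :
    Tendsto (fun δ : ℝ => Complex.I •
        ∫ t in Set.Ioi (0:ℝ), (Real.exp (-(δ * t)) : ℂ) •
          (NormedSpace.exp (-(Complex.I * t) • H) * (H * A - A * H) *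
            NormedSpace.exp ((Complex.I * t) • H)))
      (nhdsWithin 0 (Set.Ioi 0)) (nhds A) := by
  have he : CompleteOrthogonalIdempotents E := ⟨⟨hEproj, fun i j hij => hEorth i j hij⟩, hEsum⟩
  have hsame : ∀ i j, lam i = lam j → i ∈ S → j ∈ S := fun i j hlam hi => by
    by_contra hj
    have := hgap i hi j hj
    rw [hlam, sub_self, abs_zero] at this
    linarith
  subst hH hP
  exact he.tendsto_integral_dampedEvolvedCommutator lam fun i j hlam =>
    he.1.mul_mul_eq_zero_of_mem_iff_mem hA ⟨hsame i j hlam, hsame j i hlam.symm⟩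

/-- for off-diagonal `A`, `i ∫₀^∞ e^{-δt} τ_{-t}([H,A]) dt → A` as `δ ↓ 0`. -/
theorem regularized_integral_converges (n k : ℕ)
    (H P A : EuclideanSpace ℂ (Fin n) →L[ℂ] EuclideanSpace ℂ (Fin n))
    (γ : ℝ) (hγ : 0 < γ)
    (lam : Fin k → ℝ)
    (E : Fin k → (EuclideanSpace ℂ (Fin n) →L[ℂ] EuclideanSpace ℂ (Fin n)))
    (hEproj : ∀ i, E i * E i = E i) (hEsa : ∀ i, star (E i) = E i)
    (hEorth : ∀ i j, i ≠ j → E i * E j = 0)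
    (hEsum : ∑ i, E i = 1)
    (hH : H = ∑ i, (lam i : ℂ) • E i)
    (S : Finset (Fin k)) (hP : P = ∑ i ∈ S, E i)
    (hgap : ∀ i ∈ S, ∀ j ∉ S, γ ≤ |lam i - lam j|)
    (hA : A = P * A * (1 - P) + (1 - P) * A * P) :
    Tendsto (fun δ : ℝ => Complex.I •
        ∫ t in Set.Ioi (0:ℝ), (Real.exp (-(δ * t)) : ℂ) •
          (NormedSpace.exp (-(Complex.I * t) • H) * (H * A - A * H) *
            NormedSpace.exp ((Complex.I * t) • H)))
      (nhdsWithin 0 (Set.Ioi 0)) (nhds A) :=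
  regularized_integral_converges_general n k H P A γ hγ lam E hEproj hEorth hEsum hH S hP hgap hA
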